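/- arXiv:1907.01491 — 2 statements merged into one kernel-verified Lean document; each statement's English description precedes it below -/
import Mathlib

section
/- (Exponential barrier bound) Let s ∈ (0,1), m > 0, T ≥ 1, and Φ(x,t) = min{|x|^{-2s}, t^{-2s/(1+2s)}}. Let η be the mild solution of ∂_t η + (-Δ)^s η + m η = 0 on ℝ × (T,∞) with initial datum η(·,T) = Φ(·,T). Then 0 < η(x,t) ≤ C Φ(x,t) for all x ∈ ℝ, t ≥ T, for some C depending only on s and m. -/
set_option maxHeartbeats 1000000


open Real MeasureTheory Filter Topology

/-- Exponential barrier bound: the mild solution of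
`∂_t η + (-Δ)^s η + m η = 0` on `ℝ × (T,∞)` with initial datum `Φ(·,T)`, i.e.
`η(x,t) = e^{-m(t-T)} ∫_ℝ p(y,t-T) Φ(x-y,T) dy`, satisfies `0 < η ≤ C Φ` for `t ≥ T`,
where `Φ(x,t) = min{|x|^{-2s}, t^{-2s/(1+2s)}}` and `p` is the fractional heat kernel. -/
theorem stmt_16 (s m T : ℝ) (hs0 : 0 < s) (hs1 : s < 1) (hm : 0 < m) (hT : 1 ≤ T)
    (Λ : ℝ) (hΛ : 1 ≤ Λ)
    (p : ℝ → ℝ → ℝ)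
    (hpmeas : ∀ t > (0:ℝ), Measurable fun x => p x t)
    (hpmass : ∀ t > (0:ℝ), (∫ x : ℝ, p x t) = 1)
    (hpbound : ∀ (x : ℝ), ∀ t > (0:ℝ),
      Λ⁻¹ * t * (x^2 + t^(1/s)) ^ (-(1 + 2*s)/2) ≤ p x t ∧
      p x t ≤ Λ * t * (x^2 + t^(1/s)) ^ (-(1 + 2*s)/2))
    (Φ : ℝ → ℝ → ℝ)
    (hΦ : ∀ (x t : ℝ), x ≠ 0 → Φ x t = min (|x| ^ (-(2*s))) (t ^ (-(2*s)/(1 + 2*s))))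
    (hΦ0 : ∀ t : ℝ, Φ 0 t = t ^ (-(2*s)/(1 + 2*s)))
    (η : ℝ → ℝ → ℝ)
    (hηT : ∀ x : ℝ, η x T = Φ x T)
    (hη : ∀ (x : ℝ), ∀ t > T,
      η x t = Real.exp (-m * (t - T)) * ∫ y : ℝ, p y (t - T) * Φ (x - y) T) :
    ∃ C > (0:ℝ), ∀ (x : ℝ), ∀ t ≥ T, 0 < η x t ∧ η x t ≤ C * Φ x t := by
  have h12s : (0:ℝ) < 1 + 2*s := by linarith
  have hT0 : (0:ℝ) < T := by linarith
  have hΛ0 : (0:ℝ) < Λ := lt_of_lt_of_le one_pos hΛ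
  set α : ℝ := -(2*s)/(1 + 2*s) with hα
  have hαneg : α ≤ 0 := by
    rw [hα]
    apply div_nonpos_of_nonpos_of_nonneg <;> linarith
  have hTα0 : 0 < T ^ α := Real.rpow_pos_of_pos hT0 α
  have hTα1 : T ^ α ≤ 1 := Real.rpow_le_one_of_one_le_of_nonpos hT hαneg
  have hΦpos : ∀ z t : ℝ, 0 < t → 0 < Φ z t := by
    intro z t ht
    rcases eq_or_ne z 0 with rfl | hz
    · rw [hΦ0]; exact Real.rpow_pos_of_pos ht _
    · rw [hΦ z t hz]
      exact lt_min (Real.rpow_pos_of_pos (abs_pos.mpr hz) _) (Real.rpow_pos_of_pos ht _)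
  have hsm : 0 < s * m := mul_pos hs0 hm
  have hm' : 0 < 1/m := by positivity
  have hΛsm : 0 < Λ/(s*m) := div_pos hΛ0 hsm
  refine ⟨(1 + 1/m) + 4*(1 + Λ/(s*m)), by linarith, ?_⟩
  set C : ℝ := (1 + 1/m) + 4*(1 + Λ/(s*m)) with hCdef
  have hC1 : 1 ≤ C := by rw [hCdef]; linarith
  have hCA : 1 + 1/m ≤ C := by rw [hCdef]; linarith
  have hCB : 4*(1 + Λ/(s*m)) ≤ C := by rw [hCdef]; linarith
  intro x t ht
  rcases eq_or_lt_of_le ht with rfl | htT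
  · rw [hηT x]
    exact ⟨hΦpos x T hT0, le_mul_of_one_le_left (hΦpos x T hT0).le hC1⟩
  · set τ := t - T with hτdef
    have hτ : 0 < τ := by rw [hτdef]; linarith
    have ht0 : 0 < t := by linarith
    have hq_meas : Measurable fun y => p y τ := hpmeas τ hτ
    have hq_mass : (∫ y, p y τ) = 1 := hpmass τ hτ
    have hbase : ∀ y : ℝ, 0 < y^2 + τ^(1/s) :=
      fun y => add_pos_of_nonneg_of_pos (sq_nonneg y) (Real.rpow_pos_of_pos hτ _)
    have hq_pos : ∀ y, 0 < p y τ := by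
      intro y
      refine lt_of_lt_of_le ?_ (hpbound y τ hτ).1
      exact mul_pos (mul_pos (inv_pos.mpr hΛ0) hτ)
        (Real.rpow_pos_of_pos (hbase y) _)
    have hq_int : Integrable fun y => p y τ := by
      by_contra hcon
      rw [integral_undef hcon] at hq_mass
      norm_num at hq_mass
    set g : ℝ → ℝ := fun y => p y τ * min (|x - y| ^ (-(2*s))) (T ^ α) with hgdef
    have hg_meas : Measurable g := by
      apply hq_meas.mul
      fun_prop
    have hmin_nonneg : ∀ y : ℝ, 0 ≤ min (|x - y| ^ (-(2*s))) (T ^ α) :=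
      fun y => le_min (Real.rpow_nonneg (abs_nonneg _) _) hTα0.le
    have hmin_le_one : ∀ y : ℝ, min (|x - y| ^ (-(2*s))) (T ^ α) ≤ 1 :=
      fun y => le_trans (min_le_right _ _) hTα1
    have hg_nonneg : ∀ y, 0 ≤ g y := fun y => mul_nonneg (hq_pos y).le (hmin_nonneg y)
    have hg_le_q : ∀ y, g y ≤ p y τ := fun y =>
      mul_le_of_le_one_right (hq_pos y).le (hmin_le_one y)
    have hg_int : Integrable g :=
      hq_int.mono' hg_meas.aestronglyMeasurable
        (ae_of_all _ fun y => by
          rw [Real.norm_eq_abs, abs_of_nonneg (hg_nonneg y)]; exact hg_le_q y)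
    have hae : ∀ᵐ y : ℝ, y ≠ x := by
      have hset : {y : ℝ | ¬ y ≠ x} = {x} := by ext y; simp
      rw [ae_iff, hset]
      exact measure_singleton x
    have hInt_eq : (∫ y, p y τ * Φ (x - y) T) = ∫ y, g y := by
      apply integral_congr_ae
      filter_upwards [hae] with y hy
      rw [hΦ (x - y) T (sub_ne_zero.mpr (Ne.symm hy))]
    have hIg_pos : 0 < ∫ y, g y := by
      rw [MeasureTheory.integral_pos_iff_support_of_nonneg_ae (ae_of_all _ hg_nonneg) hg_int]
      refine lt_of_lt_of_le ?_ (measure_mono (?_ : Set.Ioi x ⊆ Function.support g))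
      · rw [Real.volume_Ioi]
        exact ENNReal.zero_lt_top
      · intro y hy
        have hyx : x - y ≠ 0 := sub_ne_zero.mpr (ne_of_lt hy)
        have hpos : 0 < g y :=
          mul_pos (hq_pos y)
            (lt_min (Real.rpow_pos_of_pos (abs_pos.mpr hyx) _) hTα0)
        exact Function.mem_support.mpr hpos.ne'
    have hIA : (∫ y, g y) ≤ T ^ α := by
      calc (∫ y, g y) ≤ ∫ y, T ^ α * p y τ := by
            apply integral_mono hg_int (hq_int.const_mul _)
            intro y
            show g y ≤ T ^ α * p y τ
            calc g y ≤ p y τ * T ^ α :=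
                  mul_le_mul_of_nonneg_left (min_le_right _ _) (hq_pos y).le
              _ = T ^ α * p y τ := mul_comm _ _
        _ = T ^ α := by rw [integral_const_mul, hq_mass, mul_one]
    have hexpA : Real.exp (-m * τ) * T ^ α ≤ (1 + 1/m) * t ^ α := by
      have htα : 0 < t ^ α := Real.rpow_pos_of_pos ht0 _
      have hdiv1 : (1:ℝ) ≤ t / T := (one_le_div hT0).mpr ht
      have h2 : (t/T) ^ (-α) ≤ t/T := by
        have hle1 : -α ≤ 1 := by
          rw [hα, neg_div, neg_neg, div_le_one h12s]; linarith
        have := Real.rpow_le_rpow_of_exponent_le hdiv1 hle1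
        simpa [Real.rpow_one] using this
      have h3 : t/T ≤ 1 + τ := by
        rw [div_le_iff₀ hT0, hτdef]
        nlinarith
      have h4 : 1 + τ ≤ (1 + 1/m) * Real.exp (m*τ) := by
        have e1 := Real.add_one_le_exp (m*τ)
        have e2 : (1 + 1/m) * (m*τ + 1) ≤ (1 + 1/m) * Real.exp (m*τ) :=
          mul_le_mul_of_nonneg_left e1 (by positivity)
        have e3 : 1/m * m = 1 := by field_simp
        nlinarith
      have heq : (t/T) ^ (-α) * t ^ α = T ^ α := by
        rw [Real.rpow_neg (div_nonneg ht0.le hT0.le),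
            ← Real.inv_rpow (div_nonneg ht0.le hT0.le), inv_div,
            ← Real.mul_rpow (div_nonneg hT0.le ht0.le) ht0.le,
            div_mul_cancel₀ _ ht0.ne']
      calc Real.exp (-m*τ) * T ^ α
          = Real.exp (-m*τ) * ((t/T) ^ (-α) * t ^ α) := by rw [heq]
        _ ≤ Real.exp (-m*τ) * (((1 + 1/m) * Real.exp (m*τ)) * t ^ α) := by
            apply mul_le_mul_of_nonneg_left _ (Real.exp_pos _).le
            exact mul_le_mul_of_nonneg_right (h2.trans (h3.trans h4)) htα.le
        _ = (1 + 1/m) * (Real.exp (-m*τ) * Real.exp (m*τ)) * t ^ α := by ring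
        _ = (1 + 1/m) * t ^ α := by
            rw [← Real.exp_add, show -m*τ + m*τ = 0 by ring, Real.exp_zero, mul_one]
    have hA : η x t ≤ (1 + 1/m) * t ^ α := by
      rw [hη x t htT, ← hτdef, hInt_eq]
      calc Real.exp (-m*τ) * ∫ y, g y ≤ Real.exp (-m*τ) * T ^ α :=
            mul_le_mul_of_nonneg_left hIA (Real.exp_pos _).le
        _ ≤ (1 + 1/m) * t ^ α := hexpA
    have hB : x ≠ 0 → η x t ≤ (4 * (1 + Λ/(s*m))) * |x| ^ (-(2*s)) := by
      intro hx
      have hx0 : 0 < |x| := abs_pos.mpr hx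
      set r : ℝ := |x| / 2 with hrdef
      have hr : 0 < r := by rw [hrdef]; linarith
      set S : Set ℝ := {y | |y| ≤ r} with hSdef
      have hS : MeasurableSet S := (isClosed_le continuous_abs continuous_const).measurableSet
      have hr2s : 0 < r ^ (-(2*s)) := Real.rpow_pos_of_pos hr _
      have h1 : (∫ y in S, g y) ≤ r ^ (-(2*s)) := by
        have hptw : ∀ y ∈ S, g y ≤ r ^ (-(2*s)) * p y τ := by
          intro y hy
          have hy' : |y| ≤ r := hy
          have hxr : |x| = 2 * r := by rw [hrdef]; ring
          have hxy : r ≤ |x - y| := by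
            have h := abs_sub_abs_le_abs_sub x y
            linarith
          have hle : |x - y| ^ (-(2*s)) ≤ r ^ (-(2*s)) :=
            Real.rpow_le_rpow_of_nonpos hr hxy (by linarith)
          calc g y ≤ p y τ * (r ^ (-(2*s))) :=
                mul_le_mul_of_nonneg_left ((min_le_left _ _).trans hle) (hq_pos y).le
            _ = r ^ (-(2*s)) * p y τ := mul_comm _ _
        calc (∫ y in S, g y) ≤ ∫ y in S, r ^ (-(2*s)) * p y τ :=
              setIntegral_mono_on hg_int.integrableOn (hq_int.const_mul _).integrableOn hS hptw
          _ = r ^ (-(2*s)) * ∫ y in S, p y τ := integral_const_mul _ _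
          _ ≤ r ^ (-(2*s)) * ∫ y, p y τ := by
              apply mul_le_mul_of_nonneg_left _ hr2s.le
              exact setIntegral_le_integral hq_int (ae_of_all _ fun y => (hq_pos y).le)
          _ = r ^ (-(2*s)) := by rw [hq_mass, mul_one]
      have hc : -(1+2*s) < -1 := by linarith
      have hJeq : ∀ y ∈ Set.Ioi r, y ^ (-(1+2*s)) = |y| ^ (-(1+2*s)) := fun y hy => by
        rw [abs_of_pos (hr.trans hy)]
      have hJint_Ioi : IntegrableOn (fun y : ℝ => |y| ^ (-(1+2*s))) (Set.Ioi r) :=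
        (integrableOn_Ioi_rpow_of_lt hc hr).congr_fun hJeq measurableSet_Ioi
      have hJval_Ioi : (∫ y in Set.Ioi r, |y| ^ (-(1+2*s))) = r ^ (-(2*s)) / (2*s) := by
        rw [← setIntegral_congr_fun measurableSet_Ioi hJeq,
            integral_Ioi_rpow_of_lt hc hr, show -(1+2*s) + 1 = -(2*s) by ring,
            neg_div_neg_eq]
      have hJint_Iio : IntegrableOn (fun y : ℝ => |y| ^ (-(1+2*s))) (Set.Iio (-r)) := by
        rw [← (Measure.measurePreserving_neg (volume : Measure ℝ)).integrableOn_comp_preimage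
            (Homeomorph.neg ℝ).measurableEmbedding]
        simp only [Function.comp_def, abs_neg, Set.neg_preimage, Set.neg_Iio, neg_neg]
        exact hJint_Ioi
      have hJval_Iio : (∫ y in Set.Iio (-r), |y| ^ (-(1+2*s))) = r ^ (-(2*s)) / (2*s) := by
        rw [← integral_Iic_eq_integral_Iio]
        have h := integral_comp_neg_Iic (-r) (fun y : ℝ => |y| ^ (-(1+2*s)))
        simp only [abs_neg, neg_neg] at h
        rw [h, hJval_Ioi]
      have hScomp : Sᶜ = Set.Iio (-r) ∪ Set.Ioi r := by
        ext y
        simp only [hSdef, Set.mem_compl_iff, Set.mem_setOf_eq, not_le, Set.mem_union,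
          Set.mem_Iio, Set.mem_Ioi]
        rw [lt_abs]
        constructor
        · rintro (h | h)
          · exact Or.inr h
          · exact Or.inl (by linarith)
        · rintro (h | h)
          · exact Or.inr (by linarith)
          · exact Or.inl h
      have hdisj : Disjoint (Set.Iio (-r)) (Set.Ioi r) := by
        rw [Set.disjoint_left]
        intro y h1' h2'
        have := Set.mem_Iio.mp h1'
        have := Set.mem_Ioi.mp h2'
        linarith
      have habs2 : ∀ y : ℝ, y ≠ 0 →
          (y^2 + τ^(1/s)) ^ (-(1 + 2*s)/2) ≤ |y| ^ (-(1+2*s)) := by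
        intro y hy
        have hy2 : 0 < y^2 := by positivity
        have step1 : (y^2 + τ^(1/s)) ^ (-(1 + 2*s)/2) ≤ (y^2 : ℝ) ^ (-(1 + 2*s)/2) :=
          Real.rpow_le_rpow_of_nonpos hy2
            (le_add_of_nonneg_right (Real.rpow_pos_of_pos hτ _).le)
            (by apply div_nonpos_of_nonpos_of_nonneg <;> linarith)
        have step2 : (y^2 : ℝ) ^ (-(1 + 2*s)/2) = |y| ^ (-(1+2*s)) := by
          rw [← sq_abs, ← Real.rpow_natCast |y| 2, ← Real.rpow_mul (abs_nonneg y)]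
          congr 1
          push_cast
          ring
        exact step1.trans_eq step2
      have hptw2 : ∀ y ∈ Sᶜ, g y ≤ Λ * τ * |y| ^ (-(1+2*s)) := by
        intro y hy
        have hry : r < |y| := not_le.mp hy
        have hy0 : y ≠ 0 := by
          intro h
          rw [h, abs_zero] at hry
          linarith
        calc g y ≤ p y τ := hg_le_q y
          _ ≤ Λ * τ * (y^2 + τ^(1/s)) ^ (-(1 + 2*s)/2) := (hpbound y τ hτ).2
          _ ≤ Λ * τ * |y| ^ (-(1+2*s)) :=
              mul_le_mul_of_nonneg_left (habs2 y hy0) (mul_nonneg hΛ0.le hτ.le)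
      have hJint : IntegrableOn (fun y : ℝ => Λ * τ * |y| ^ (-(1+2*s))) Sᶜ := by
        rw [hScomp]
        exact (hJint_Iio.union hJint_Ioi).const_mul (Λ * τ)
      have hval : (∫ y in Sᶜ, Λ * τ * |y| ^ (-(1+2*s))) = Λ * τ * (r ^ (-(2*s)) / s) := by
        rw [hScomp, setIntegral_union hdisj measurableSet_Ioi (hJint_Iio.const_mul (Λ * τ))
            (hJint_Ioi.const_mul (Λ * τ)), integral_const_mul, integral_const_mul,
            hJval_Iio, hJval_Ioi]
        field_simp
        ring
      have h2 : (∫ y in Sᶜ, g y) ≤ Λ * τ * (r ^ (-(2*s)) / s) := by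
        calc (∫ y in Sᶜ, g y) ≤ ∫ y in Sᶜ, Λ * τ * |y| ^ (-(1+2*s)) :=
              setIntegral_mono_on hg_int.integrableOn hJint hS.compl hptw2
          _ = Λ * τ * (r ^ (-(2*s)) / s) := hval
      have hIB : (∫ y, g y) ≤ r ^ (-(2*s)) * (1 + Λ * τ / s) := by
        rw [← integral_add_compl hS hg_int]
        calc (∫ y in S, g y) + ∫ y in Sᶜ, g y
            ≤ r ^ (-(2*s)) + Λ * τ * (r ^ (-(2*s)) / s) := add_le_add h1 h2
          _ = r ^ (-(2*s)) * (1 + Λ * τ / s) := by ring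
      have hexpB : Real.exp (-m*τ) * (1 + Λ * τ / s) ≤ 1 + Λ/(s*m) := by
        have hE1 : Real.exp (-m*τ) ≤ 1 := by
          rw [Real.exp_le_one_iff]
          nlinarith
        have hE2 : Real.exp (-m*τ) * τ ≤ 1/m := by
          have h1' : m * τ ≤ Real.exp (m*τ) := by nlinarith [Real.add_one_le_exp (m*τ)]
          have h2' : (0:ℝ) < Real.exp (m*τ) := Real.exp_pos _
          rw [show -m*τ = -(m*τ) by ring, Real.exp_neg]
          calc (Real.exp (m*τ))⁻¹ * τ ≤ (Real.exp (m*τ))⁻¹ * (Real.exp (m*τ) / m) := by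
                apply mul_le_mul_of_nonneg_left _ (inv_nonneg.mpr h2'.le)
                rw [le_div_iff₀ hm]
                nlinarith
            _ = 1/m := by field_simp
        have expand : Real.exp (-m*τ) * (1 + Λ*τ/s)
            = Real.exp (-m*τ) + (Λ/s) * (Real.exp (-m*τ) * τ) := by ring
        have hstep : (Λ/s) * (Real.exp (-m*τ) * τ) ≤ (Λ/s) * (1/m) :=
          mul_le_mul_of_nonneg_left hE2 (div_nonneg hΛ0.le hs0.le)
        have heq2 : (Λ/s) * (1/m) = Λ/(s*m) := by
          rw [div_mul_div_comm, mul_one]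
        rw [expand]
        linarith
      have hrx : r ^ (-(2*s)) ≤ 4 * |x| ^ (-(2*s)) := by
        have hrw : r ^ (-(2*s)) = 2 ^ (2*s) * |x| ^ (-(2*s)) := by
          rw [hrdef, Real.div_rpow (abs_nonneg x) (by norm_num : (0:ℝ) ≤ 2),
              Real.rpow_neg (by norm_num : (0:ℝ) ≤ 2), div_eq_mul_inv, inv_inv, mul_comm]
        rw [hrw]
        have h2s4 : (2:ℝ) ^ (2*s) ≤ 4 := by
          calc (2:ℝ) ^ (2*s) ≤ 2 ^ (2:ℝ) :=
                Real.rpow_le_rpow_of_exponent_le one_le_two (by linarith)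
            _ = 4 := by
                rw [Real.rpow_two]
                norm_num
        exact mul_le_mul_of_nonneg_right h2s4 (Real.rpow_nonneg (abs_nonneg x) _)
      rw [hη x t htT, ← hτdef, hInt_eq]
      calc Real.exp (-m * τ) * ∫ y, g y
          ≤ Real.exp (-m*τ) * (r ^ (-(2*s)) * (1 + Λ*τ/s)) :=
            mul_le_mul_of_nonneg_left hIB (Real.exp_pos _).le
        _ = r ^ (-(2*s)) * (Real.exp (-m*τ) * (1 + Λ*τ/s)) := by ring
        _ ≤ r ^ (-(2*s)) * (1 + Λ/(s*m)) := mul_le_mul_of_nonneg_left hexpB hr2s.le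
        _ ≤ (4 * |x| ^ (-(2*s))) * (1 + Λ/(s*m)) :=
            mul_le_mul_of_nonneg_right hrx (by linarith)
        _ = (4 * (1 + Λ/(s*m))) * |x| ^ (-(2*s)) := by ring
    constructor
    · rw [hη x t htT, ← hτdef, hInt_eq]
      exact mul_pos (Real.exp_pos _) hIg_pos
    · rcases eq_or_ne x 0 with rfl | hx
      · rw [hΦ0]
        calc η 0 t ≤ (1 + 1/m) * t ^ α := hA
          _ ≤ C * t ^ α :=
              mul_le_mul_of_nonneg_right hCA (Real.rpow_pos_of_pos ht0 α).le
      · rw [hΦ x t hx]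
        rcases le_total (|x| ^ (-(2*s))) (t ^ α) with hmin | hmin
        · rw [min_eq_left hmin]
          calc η x t ≤ (4 * (1 + Λ/(s*m))) * |x| ^ (-(2*s)) := hB hx
            _ ≤ C * |x| ^ (-(2*s)) :=
                mul_le_mul_of_nonneg_right hCB (Real.rpow_nonneg (abs_nonneg x) _)
        · rw [min_eq_right hmin]
          calc η x t ≤ (1 + 1/m) * t ^ α := hA
            _ ≤ C * t ^ α :=
                mul_le_mul_of_nonneg_right hCA (Real.rpow_pos_of_pos ht0 α).le
end

section
/- (Coercivity of the linearized ODE system on mean-zero vectors) Let ξ⁰_i(t) = β_i t^{1/(1+2s)} be the self-similar solution with β_1 < ... < β_N and define ℛ_i(ξ) = -(γ/(2s)) Σ_{j≠i} (ξ_i - ξ_j)/|ξ_i - ξ_j|^{1+2s}. Then for every t > 0 and every η ∈ ℝ^N with Σ_i η_i = 0, ⟨D_ξ ℛ(ξ⁰(t)) η, η⟩ ≥ (2δ/t) |η|², where δ = Nγ/(16 β_N^{1+2s}). More precisely ⟨D_ξ ℛ(ξ⁰(t)) η, η⟩ = (γ/t) Σ_{i<j} |η_i - η_j|² / (β_j -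 β_i)^{1+2s} for all η ∈ ℝ^N. -/
open Real Finset

lemma quad_aux {N : ℕ} (a : Fin N → Fin N → ℝ) (hsym : ∀ i j, a i j = a j i)
    (η : Fin N → ℝ) :
    ∑ i, ∑ k, (if i = k then ∑ j ∈ Finset.univ.erase i, a i j else -(a i k)) * η i * η k
      = ∑ p ∈ Finset.univ.filter (fun p : Fin N × Fin N => p.1 < p.2),
          a p.1 p.2 * (η p.1 - η p.2) ^ 2 := by
  set F : Fin N → Fin N → ℝ :=
    fun i j => if i = j then 0 else a i j * (η i ^ 2 - η i * η j) with hF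
  set G : Fin N → Fin N → ℝ :=
    fun i j => if i = j then 0 else a i j * (η i - η j) ^ 2 with hG
  have hL : ∀ i : Fin N,
      (∑ k, (if i = k then ∑ j ∈ Finset.univ.erase i, a i j else -(a i k)) * η i * η k)
        = ∑ j, F i j := by
    intro i
    rw [← Finset.add_sum_erase _ _ (Finset.mem_univ i),
        ← Finset.sum_erase (s := Finset.univ) (a := i) (f := F i) (by simp [hF]),
        if_pos rfl]
    rw [Finset.sum_mul, Finset.sum_mul, ← Finset.sum_add_distrib]
    refine Finset.sum_congr rfl fun j hj => ?_
    have hij : i ≠ j := fun h => (Finset.mem_erase.mp hj).1 h.symm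
    simp only [hF, if_neg hij, if_neg (Ne.symm hij)]
    ring
  have hswap : ∀ i j, F i j + F j i = G i j := by
    intro i j
    by_cases h : i = j
    · subst h; simp [hF, hG]
    · simp only [hF, hG, if_neg h, if_neg (Ne.symm h)]
      rw [hsym j i]; ring
  have hGsym : ∀ i j, G i j = G j i := by
    intro i j
    by_cases h : i = j
    · subst h; rfl
    · simp only [hG, if_neg h, if_neg (Ne.symm h), hsym i j]; ring
  have hcomm : (∑ i, ∑ j, F j i) = ∑ i, ∑ j, F i j := Finset.sum_comm
  have h2 : 2 * (∑ i, ∑ j, F i j) = ∑ i, ∑ j, G i j := by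
    have : (∑ i, ∑ j, G i j) = (∑ i, ∑ j, F i j) + ∑ i, ∑ j, F j i := by
      rw [← Finset.sum_add_distrib]
      refine Finset.sum_congr rfl fun i _ => ?_
      rw [← Finset.sum_add_distrib]
      exact Finset.sum_congr rfl fun j _ => (hswap i j).symm
    rw [this, hcomm]; ring
  have hGprod : (∑ i, ∑ j, G i j) = ∑ p : Fin N × Fin N, G p.1 p.2 := by
    rw [Fintype.sum_prod_type]
  have hsplit : (∑ p : Fin N × Fin N, G p.1 p.2)
      = ∑ p ∈ Finset.univ.filter (fun p : Fin N × Fin N => p.1 < p.2), G p.1 p.2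
        + ∑ p ∈ Finset.univ.filter (fun p : Fin N × Fin N => ¬ p.1 < p.2), G p.1 p.2 :=
    (Finset.sum_filter_add_sum_filter_not _ _ _).symm
  have hnot : ∑ p ∈ Finset.univ.filter (fun p : Fin N × Fin N => ¬ p.1 < p.2), G p.1 p.2
      = ∑ p ∈ Finset.univ.filter (fun p : Fin N × Fin N => p.2 < p.1), G p.1 p.2 := by
    refine (Finset.sum_subset ?_ ?_).symm
    · intro p hp
      simp only [Finset.mem_filter, Finset.mem_univ, true_and] at hp ⊢
      exact not_lt.mpr hp.le
    · intro p hp hp'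
      simp only [Finset.mem_filter, Finset.mem_univ, true_and] at hp hp'
      have : p.1 = p.2 := le_antisymm (not_lt.mp hp') (not_lt.mp hp)
      simp [hG, this]
  have hgt : ∑ p ∈ Finset.univ.filter (fun p : Fin N × Fin N => p.2 < p.1), G p.1 p.2
      = ∑ p ∈ Finset.univ.filter (fun p : Fin N × Fin N => p.1 < p.2), G p.1 p.2 := by
    refine Finset.sum_nbij' (i := Prod.swap) (j := Prod.swap) ?_ ?_ ?_ ?_ ?_
    · intro p hp; simp only [Finset.mem_filter, Finset.mem_univ, true_and] at hp ⊢; exact hp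
    · intro p hp; simp only [Finset.mem_filter, Finset.mem_univ, true_and] at hp ⊢; exact hp
    · intro p _; rfl
    · intro p _; rfl
    · intro p _; exact hGsym p.1 p.2
  have hfin : ∑ p ∈ Finset.univ.filter (fun p : Fin N × Fin N => p.1 < p.2), G p.1 p.2
      = ∑ p ∈ Finset.univ.filter (fun p : Fin N × Fin N => p.1 < p.2),
          a p.1 p.2 * (η p.1 - η p.2) ^ 2 := by
    refine Finset.sum_congr rfl fun p hp => ?_
    simp only [Finset.mem_filter] at hp
    simp [hG, ne_of_lt hp.2]
  have hLHS : (∑ i, ∑ k, (if i = k then ∑ j ∈ Finset.univ.erase i, a i j else -(a i k)) * η i * η k)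
      = ∑ i, ∑ j, F i j := Finset.sum_congr rfl fun i _ => hL i
  rw [hLHS]
  have := h2
  rw [hGprod, hsplit, hnot, hgt, hfin] at this
  linarith

lemma pair_sum {N : ℕ} (hN : 1 ≤ N) (η : Fin N → ℝ) :
    ∑ p ∈ Finset.univ.filter (fun p : Fin N × Fin N => p.1 < p.2), (η p.1 - η p.2) ^ 2
      = N * (∑ i, η i ^ 2) - (∑ i, η i) ^ 2 := by
  have h := quad_aux (fun _ _ => (1:ℝ)) (fun _ _ => rfl) η
  simp only [one_mul] at h
  rw [← h]
  have hterm : ∀ i : Fin N,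
      (∑ k, (if i = k then (∑ j ∈ Finset.univ.erase i, (1:ℝ)) else -(1:ℝ)) * η i * η k)
        = (N:ℝ) * η i ^ 2 - η i * ∑ k, η k := by
    intro i
    have hcard : (∑ j ∈ Finset.univ.erase i, (1:ℝ)) = (N:ℝ) - 1 := by
      rw [Finset.sum_const, Finset.card_erase_of_mem (Finset.mem_univ i)]
      simp only [Finset.card_univ, Fintype.card_fin, nsmul_eq_mul, mul_one]
      push_cast [hN]
      ring
    calc (∑ k, (if i = k then (∑ j ∈ Finset.univ.erase i, (1:ℝ)) else -(1:ℝ)) * η i * η k)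
        = ∑ k, ((if i = k then (N:ℝ) * (η i * η k) else 0) - η i * η k) := by
          refine Finset.sum_congr rfl fun k _ => ?_
          by_cases hik : i = k
          · rw [if_pos hik, if_pos hik, hcard]; ring
          · rw [if_neg hik, if_neg hik]; ring
      _ = (N:ℝ) * η i ^ 2 - η i * ∑ k, η k := by
          rw [Finset.sum_sub_distrib, Finset.sum_ite_eq Finset.univ i
            (fun k => (N:ℝ) * (η i * η k)), if_pos (Finset.mem_univ i), Finset.mul_sum]
          ring
  rw [Finset.sum_congr rfl fun i _ => hterm i, Finset.sum_sub_distrib,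
    ← Finset.mul_sum, ← Finset.sum_mul]
  ring

/-- Jacobian of the field `ℛ_i(ξ) = -(γ/(2s)) Σ_{j≠i}(ξ_i-ξ_j)/|ξ_i-ξ_j|^{1+2s}`:
`D_{ξ_k}ℛ_i(ξ) = γ { δ_{ik} Σ_{j≠i}|ξ_i-ξ_j|^{-(1+2s)} - (1-δ_{ik})|ξ_i-ξ_k|^{-(1+2s)} }`. -/
noncomputable def DR (N : ℕ) (s γ : ℝ) (ξ : Fin N → ℝ) (i k : Fin N) : ℝ :=
  γ * (if i = k then ∑ j ∈ Finset.univ.erase i, |ξ i - ξ j| ^ (-(1 + 2*s))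
       else -(|ξ i - ξ k| ^ (-(1 + 2*s))))

/-- Coercivity of the linearized ODE system on mean-zero vectors: with
`ξ⁰_i(t) = β_i t^{1/(1+2s)}`, for every `t > 0` and `η ∈ ℝ^N`,
`⟨D_ξℛ(ξ⁰(t))η, η⟩ = (γ/t) Σ_{i<j}|η_i-η_j|²/(β_j-β_i)^{1+2s}`, and when `Σ_i η_i = 0`
it is bounded below by `(2δ/t)|η|²` with `δ = Nγ/(16 β_N^{1+2s})`. -/
theorem stmt_18 (N : ℕ) (hN : 2 ≤ N) (s γ : ℝ) (hs0 : 0 < s) (hs1 : s < 1) (hγ : 0 < γ)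
    (β : Fin N → ℝ) (hβ : StrictMono β)
    (hβeq : ∀ i, β i = ((1 + 2*s) * γ / (2*s)) *
      ∑ j ∈ Finset.univ.erase i, (β i - β j) / |β i - β j| ^ (1 + 2*s))
    (hβsym : ∀ i : Fin N, β i = - β i.rev)
    (hβN : 0 < β ⟨N - 1, by omega⟩) :
    ∀ t > (0:ℝ), ∀ η : Fin N → ℝ,
      (∑ i, ∑ k, DR N s γ (fun i => β i * t ^ (1/(1 + 2*s))) i k * η i * η k) =
        (γ / t) * ∑ p ∈ Finset.univ.filter (fun p : Fin N × Fin N => p.1 < p.2),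
          (η p.1 - η p.2) ^ 2 / (β p.2 - β p.1) ^ (1 + 2*s) ∧
      ((∑ i, η i) = 0 →
        (2 * (N * γ / (16 * (β ⟨N - 1, by omega⟩) ^ (1 + 2*s))) / t) * (∑ i, (η i) ^ 2) ≤
          ∑ i, ∑ k, DR N s γ (fun i => β i * t ^ (1/(1 + 2*s))) i k * η i * η k) := by
  intro t ht η
  have hq0 : (0:ℝ) < 1 + 2*s := by linarith
  have hq0' : (1 + 2*s) ≠ 0 := ne_of_gt hq0
  have hq3 : (1 + 2*s) ≤ 3 := by linarith
  -- |ξ i - ξ k| ^ (-(1+2s)) = |β i - β k| ^ (-(1+2s)) * t⁻¹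
  have hξabs : ∀ i k : Fin N, i ≠ k →
      |β i * t ^ (1/(1 + 2*s)) - β k * t ^ (1/(1 + 2*s))| ^ (-(1 + 2*s))
        = |β i - β k| ^ (-(1 + 2*s)) * t⁻¹ := by
    intro i k _
    have h1 : β i * t ^ (1/(1 + 2*s)) - β k * t ^ (1/(1 + 2*s))
        = (β i - β k) * t ^ (1/(1 + 2*s)) := by ring
    rw [h1, abs_mul, abs_of_pos (Real.rpow_pos_of_pos ht _),
      Real.mul_rpow (abs_nonneg _) (Real.rpow_nonneg ht.le _)]
    congr 1
    rw [← Real.rpow_mul ht.le]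
    have hexp : (1/(1 + 2*s)) * (-(1 + 2*s)) = -1 := by field_simp
    rw [hexp, Real.rpow_neg_one]
  -- main equality
  have hmain : (∑ i, ∑ k, DR N s γ (fun i => β i * t ^ (1/(1 + 2*s))) i k * η i * η k) =
      (γ / t) * ∑ p ∈ Finset.univ.filter (fun p : Fin N × Fin N => p.1 < p.2),
        (η p.1 - η p.2) ^ 2 / (β p.2 - β p.1) ^ (1 + 2*s) := by
    have hq := quad_aux
      (fun i k => |β i * t ^ (1/(1 + 2*s)) - β k * t ^ (1/(1 + 2*s))| ^ (-(1 + 2*s)))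
      (fun i j => by beta_reduce; rw [abs_sub_comm]) η
    have hpull : (∑ i, ∑ k, DR N s γ (fun i => β i * t ^ (1/(1 + 2*s))) i k * η i * η k)
        = γ * ∑ i, ∑ k, (if i = k then
              ∑ j ∈ Finset.univ.erase i,
                |β i * t ^ (1/(1 + 2*s)) - β j * t ^ (1/(1 + 2*s))| ^ (-(1 + 2*s))
            else -(|β i * t ^ (1/(1 + 2*s)) - β k * t ^ (1/(1 + 2*s))| ^ (-(1 + 2*s))))
            * η i * η k := by
      rw [Finset.mul_sum]
      refine Finset.sum_congr rfl fun i _ => ?_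
      rw [Finset.mul_sum]
      refine Finset.sum_congr rfl fun k _ => ?_
      simp only [DR]; ring
    rw [hpull, hq, Finset.mul_sum, Finset.mul_sum]
    refine Finset.sum_congr rfl fun q hq' => ?_
    have hlt : q.1 < q.2 := (Finset.mem_filter.mp hq').2
    have hblt : β q.1 < β q.2 := hβ hlt
    rw [hξabs q.1 q.2 (ne_of_lt hlt)]
    have habs : |β q.1 - β q.2| = β q.2 - β q.1 := by
      rw [abs_sub_comm]; exact abs_of_pos (by linarith)
    rw [habs, Real.rpow_neg (by linarith : (0:ℝ) ≤ β q.2 - β q.1)]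
    field_simp
  refine ⟨hmain, fun h0 => ?_⟩
  rw [hmain]
  set B : ℝ := β ⟨N - 1, by omega⟩ with hBdef
  have hBpos : 0 < B := hβN
  have hBppos : 0 < B ^ (1 + 2*s) := Real.rpow_pos_of_pos hBpos _
  have hhigh : ∀ i, β i ≤ B := by
    intro i
    exact hβ.monotone (by simp only [Fin.le_def]; omega)
  have hlow : ∀ i, -B ≤ β i := by
    have h0' : β ⟨0, by omega⟩ = -B := by
      rw [hβsym ⟨0, by omega⟩]
      have : (⟨0, by omega⟩ : Fin N).rev = ⟨N - 1, by omega⟩ := by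
        apply Fin.ext; simp [Fin.val_rev]
      rw [this]
    intro i
    rw [← h0']
    exact hβ.monotone (by simp only [Fin.le_def]; omega)
  -- bound each denominator
  have hS : ((N:ℝ) * (∑ i, η i ^ 2)) / (8 * B ^ (1 + 2*s)) ≤
      ∑ p ∈ Finset.univ.filter (fun p : Fin N × Fin N => p.1 < p.2),
        (η p.1 - η p.2) ^ 2 / (β p.2 - β p.1) ^ (1 + 2*s) := by
    have hps : ∑ p ∈ Finset.univ.filter (fun p : Fin N × Fin N => p.1 < p.2),
        (η p.1 - η p.2) ^ 2 = (N:ℝ) * (∑ i, η i ^ 2) := by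
      rw [pair_sum (by omega) η, h0]; ring
    calc ((N:ℝ) * (∑ i, η i ^ 2)) / (8 * B ^ (1 + 2*s))
        = ∑ p ∈ Finset.univ.filter (fun p : Fin N × Fin N => p.1 < p.2),
            (η p.1 - η p.2) ^ 2 / (8 * B ^ (1 + 2*s)) := by
          rw [← Finset.sum_div, hps]
      _ ≤ _ := by
          refine Finset.sum_le_sum fun q hq' => ?_
          have hlt : q.1 < q.2 := (Finset.mem_filter.mp hq').2
          have hblt : β q.1 < β q.2 := hβ hlt
          have hdpos : 0 < β q.2 - β q.1 := by linarith
          have hub : β q.2 - β q.1 ≤ 2 * B := by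
            have := hhigh q.2; have := hlow q.1; linarith
          have h2p : ((2:ℝ)) ^ (1 + 2*s) ≤ 8 := by
            have h1 : ((2:ℝ)) ^ (1 + 2*s) ≤ (2:ℝ) ^ (3:ℝ) :=
              (Real.rpow_le_rpow_left_iff (by norm_num)).mpr hq3
            have h2 : ((2:ℝ)) ^ (3:ℝ) = 8 := by
              rw [show (3:ℝ) = ((3:ℕ):ℝ) by norm_num, Real.rpow_natCast]; norm_num
            linarith
          have hpow : (β q.2 - β q.1) ^ (1 + 2*s) ≤ 8 * B ^ (1 + 2*s) := by
            calc (β q.2 - β q.1) ^ (1 + 2*s) ≤ (2 * B) ^ (1 + 2*s) :=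
                  Real.rpow_le_rpow hdpos.le hub hq0.le
              _ = (2:ℝ) ^ (1 + 2*s) * B ^ (1 + 2*s) :=
                  Real.mul_rpow (by norm_num) hBpos.le
              _ ≤ 8 * B ^ (1 + 2*s) :=
                  mul_le_mul_of_nonneg_right h2p hBppos.le
          exact div_le_div_of_nonneg_left (by positivity)
            (Real.rpow_pos_of_pos hdpos _) hpow
  calc (2 * ((N:ℝ) * γ / (16 * B ^ (1 + 2*s))) / t) * (∑ i, η i ^ 2)
      = (γ / t) * (((N:ℝ) * (∑ i, η i ^ 2)) / (8 * B ^ (1 + 2*s))) := by ring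
    _ ≤ _ := mul_le_mul_of_nonneg_left hS (by positivity)
end
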